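/- arXiv:2209.12719 — 2 statements merged into one kernel-verified Lean document; each statement's English description precedes it below -/
import Mathlib

section
/- Let m ≥ 2, let N, P_1, ..., P_m ∈ K[t] with S = deg N ≥ 0, deg P_m = S + 1, and deg P_j < S + 1 for all j = 1,...,m-1. Define polynomial sequences A_{n,j} (1 ≤ j ≤ m) by arbitrary initial data (A_{0,1},...,A_{0,m}) ≠ (0,...,0) and the recurrences A_{k+1,j} = P_j A_{k,1} + N·(tD)A_{k,j} + N·A_{k,j+1} for 1 ≤ j ≤ m-1 and A_{k+1,m} = P_m A_{k,1} + N·(tD)A_{k,m}. Then for every k ∈ ℕ the m×m determinant det(A_{k+i-1,j})_{1≤i,j≤m} is a nonzero polynomial. -/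
open Polynomial

lemma auxDeriv {K : Type*} [CommSemiring K] (p : Polynomial K) :
    (X * derivative p).natDegree ≤ p.natDegree := by
  rcases eq_or_ne (derivative p) 0 with h | h
  · simp [h]
  · have h1 : 1 ≤ p.natDegree := by
      by_contra hc
      push_neg at hc
      obtain ⟨x, hx⟩ := (Polynomial.natDegree_eq_zero (p := p)).mp (by omega)
      rw [← hx] at h; simp at h
    calc (X * derivative p).natDegree ≤ X.natDegree + (derivative p).natDegree :=
          Polynomial.natDegree_mul_le
      _ ≤ 1 + (p.natDegree - 1) :=
          Nat.add_le_add Polynomial.natDegree_X_le (Polynomial.natDegree_derivative_le p)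
      _ ≤ p.natDegree := by omega

lemma bndAux {K : Type*} [Semiring K] {mm wj T d : ℕ} {q : Polynomial K}
    (hq : q ≠ 0 → mm * q.natDegree + wj ≤ T) (hd : d ≤ q.natDegree) (hw : wj ≤ T) :
    mm * d + wj ≤ T := by
  rcases eq_or_ne q 0 with rfl | h
  · simp only [Polynomial.natDegree_zero, Nat.le_zero] at hd
    subst hd; simpa using hw
  · have h1 := hq h
    have h2 : mm * d ≤ mm * q.natDegree := Nat.mul_le_mul_left _ hd
    omega

lemma sumBound2 {K : Type*} [Semiring K] {mm wj T : ℕ} {a b : Polynomial K}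
    (ha : a ≠ 0 → mm * a.natDegree + wj ≤ T) (hb : b ≠ 0 → mm * b.natDegree + wj ≤ T)
    (h : a + b ≠ 0) : mm * (a + b).natDegree + wj ≤ T := by
  have hw : wj ≤ T := by
    rcases eq_or_ne a 0 with h1 | h1
    · rcases eq_or_ne b 0 with h2 | h2
      · exact absurd (by rw [h1, h2, add_zero]) h
      · have := hb h2; omega
    · have := ha h1; omega
  have h1 : (a + b).natDegree ≤ max a.natDegree b.natDegree := Polynomial.natDegree_add_le _ _
  rcases le_max_iff.mp h1 with h2 | h2
  · exact bndAux ha h2 hw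
  · exact bndAux hb h2 hw

lemma sumBound3 {K : Type*} [Semiring K] {mm wj T : ℕ} {a b c : Polynomial K}
    (ha : a ≠ 0 → mm * a.natDegree + wj ≤ T) (hb : b ≠ 0 → mm * b.natDegree + wj ≤ T)
    (hc : c ≠ 0 → mm * c.natDegree + wj ≤ T)
    (h : a + b + c ≠ 0) : mm * (a + b + c).natDegree + wj ≤ T := by
  exact sumBound2 (sumBound2 ha hb) hc h

/-- **Theorem 1.** Let `m ≥ 2`, `N, P₁, …, P_m ∈ K[t]` with `S = deg N ≥ 0`,
`deg P_m = S + 1` and `deg P_j < S + 1` for `j = 1, …, m-1`. Define polynomial sequences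
`A_{n,j}` by arbitrary nonzero initial data and the recurrences
`A_{k+1,j} = P_j A_{k,1} + N·(tD)A_{k,j} + N·A_{k,j+1}` (`j < m`) and
`A_{k+1,m} = P_m A_{k,1} + N·(tD)A_{k,m}`. Then for every `k` the determinant
`det (A_{k+i-1,j})_{1≤i,j≤m}` is a nonzero polynomial.
(`A n j` with `j : Fin m` stands for `A_{n,j+1}`.) -/
theorem stmt3 (K : Type*) [Field K] [CharZero K]
    (m : ℕ) (hm : 2 ≤ m)
    (N : Polynomial K) (P : Fin m → Polynomial K)
    (hN : N ≠ 0)  -- S = deg N ≥ 0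
    (hPm : (P ⟨m - 1, by omega⟩).degree = N.degree + 1)
    (hPj : ∀ j : Fin m, (j : ℕ) + 1 < m → (P j).degree < N.degree + 1)
    (A : ℕ → Fin m → Polynomial K)
    (hA0 : ∃ j : Fin m, A 0 j ≠ 0)
    (hrec : ∀ k : ℕ, ∀ j : Fin m, ∀ h : (j : ℕ) + 1 < m,
      A (k + 1) j = P j * A k ⟨0, by omega⟩
        + N * (X * derivative (A k j)) + N * A k ⟨(j : ℕ) + 1, h⟩)
    (hrecm : ∀ k : ℕ,
      A (k + 1) ⟨m - 1, by omega⟩ = P ⟨m - 1, by omega⟩ * A k ⟨0, by omega⟩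
        + N * (X * derivative (A k ⟨m - 1, by omega⟩))) :
    ∀ k : ℕ, Matrix.det (Matrix.of fun i j : Fin m => A (k + (i : ℕ)) j) ≠ 0 := by
  classical
  have hm0 : 0 < m := by omega
  set S := N.natDegree with hSdef
  set z : Fin m := ⟨0, hm0⟩ with hzdef
  set lst : Fin m := ⟨m - 1, by omega⟩ with hlstdef
  -- sanitized hypotheses
  have hrec' : ∀ k : ℕ, ∀ j : Fin m, ∀ h : (j : ℕ) + 1 < m,
      A (k + 1) j = P j * A k z + N * (X * derivative (A k j)) + N * A k ⟨(j : ℕ) + 1, h⟩ :=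
    hrec
  have hrecm' : ∀ k : ℕ,
      A (k + 1) lst = P lst * A k z + N * (X * derivative (A k lst)) := hrecm
  have hPm' : (P lst).degree = N.degree + 1 := hPm
  -- degree facts
  have hNdeg : N.degree = (S : WithBot ℕ) := Polynomial.degree_eq_natDegree hN
  have hPmne : P lst ≠ 0 := by
    intro h
    rw [h, Polynomial.degree_zero, hNdeg] at hPm'
    have : ((S : WithBot ℕ) + 1) ≠ ⊥ := by
      rw [← Nat.cast_one, ← Nat.cast_add]
      exact WithBot.coe_ne_bot
    exact this hPm'.symm
  have hPmdeg : (P lst).natDegree = S + 1 := by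
    apply Polynomial.natDegree_eq_of_degree_eq_some
    rw [hPm', hNdeg, ← Nat.cast_one, ← Nat.cast_add]
  have hPjdeg : ∀ j : Fin m, (j : ℕ) + 1 < m → P j ≠ 0 → (P j).natDegree ≤ S := by
    intro j hj hne
    have h2 := hPj j hj
    rw [hNdeg, Polynomial.degree_eq_natDegree hne, ← Nat.cast_one, ← Nat.cast_add] at h2
    exact Nat.lt_succ_iff.mp (by exact_mod_cast h2)
  -- one evolution step preserves the degree invariant
  have key : ∀ (n μ : ℕ),
      ((∀ j : Fin m, A n j ≠ 0 → m * (A n j).natDegree + (m - 1 - (j : ℕ)) ≤ μ) ∧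
        (∃ j : Fin m, A n j ≠ 0 ∧ m * (A n j).natDegree + (m - 1 - (j : ℕ)) = μ)) →
      ((∀ j : Fin m, A (n+1) j ≠ 0 →
          m * (A (n+1) j).natDegree + (m - 1 - (j : ℕ)) ≤ μ + (m * S + 1)) ∧
        (∃ j : Fin m, A (n+1) j ≠ 0 ∧
          m * (A (n+1) j).natDegree + (m - 1 - (j : ℕ)) = μ + (m * S + 1))) := by
    rintro n μ ⟨hbd, j₀, hj₀ne, hj₀eq⟩
    have hzv : (z : ℕ) = 0 := rfl
    have hlv : (lst : ℕ) = m - 1 := rfl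
    have hd0 : A n z ≠ 0 → m * (A n z).natDegree + (m - 1) ≤ μ := by
      intro h
      have h' := hbd z h
      rw [hzv] at h'
      omega
    have hbP : ∀ j : Fin m, (j : ℕ) + 1 < m → P j * A n z ≠ 0 →
        m * (P j * A n z).natDegree + (m - 1 - (j : ℕ)) ≤ μ + m * S := by
      intro j hj hne
      have hP0 : P j ≠ 0 := left_ne_zero_of_mul hne
      have hA0 : A n z ≠ 0 := right_ne_zero_of_mul hne
      rw [Polynomial.natDegree_mul hP0 hA0, Nat.mul_add]
      have h1 : m * (P j).natDegree ≤ m * S := Nat.mul_le_mul_left _ (hPjdeg j hj hP0)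
      have h2 := hd0 hA0
      have h4 : (j : ℕ) < m := j.isLt
      omega
    have hbPm : P lst * A n z ≠ 0 →
        m * (P lst * A n z).natDegree + (m - 1 - (lst : ℕ)) ≤ μ + (m * S + 1) := by
      intro hne
      have hA0 : A n z ≠ 0 := right_ne_zero_of_mul hne
      rw [Polynomial.natDegree_mul hPmne hA0, hPmdeg, hlv, Nat.mul_add, Nat.mul_add]
      have h2 := hd0 hA0
      omega
    have hbD : ∀ j : Fin m, N * (X * derivative (A n j)) ≠ 0 →
        m * (N * (X * derivative (A n j))).natDegree + (m - 1 - (j : ℕ)) ≤ μ + m * S := by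
      intro j hne
      have hx : X * derivative (A n j) ≠ 0 := right_ne_zero_of_mul hne
      have hAj : A n j ≠ 0 := by
        intro h0; rw [h0] at hx; simp at hx
      rw [Polynomial.natDegree_mul hN hx, ← hSdef, Nat.mul_add]
      have h1 : m * (X * derivative (A n j)).natDegree ≤ m * (A n j).natDegree :=
        Nat.mul_le_mul_left _ (auxDeriv _)
      have h2 := hbd j hAj
      omega
    have hbS : ∀ j : Fin m, ∀ h : (j : ℕ) + 1 < m, N * A n ⟨(j : ℕ) + 1, h⟩ ≠ 0 →
        m * (N * A n ⟨(j : ℕ) + 1, h⟩).natDegree + (m - 1 - (j : ℕ)) ≤ μ + (m * S + 1) := by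
      intro j h hne
      have hA1 : A n ⟨(j : ℕ) + 1, h⟩ ≠ 0 := right_ne_zero_of_mul hne
      rw [Polynomial.natDegree_mul hN hA1, ← hSdef, Nat.mul_add]
      have h2 := hbd ⟨(j : ℕ) + 1, h⟩ hA1
      have h3 : ((⟨(j : ℕ) + 1, h⟩ : Fin m) : ℕ) = (j : ℕ) + 1 := rfl
      rw [h3] at h2
      have h4 : (j : ℕ) + 1 < m := h
      omega
    constructor
    · intro j hne
      by_cases hjl : (j : ℕ) + 1 < m
      · rw [hrec' n j hjl] at hne ⊢
        refine sumBound3 ?_ ?_ ?_ hne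
        · intro h; have := hbP j hjl h; omega
        · intro h; have := hbD j h; omega
        · intro h; exact hbS j hjl h
      · have hj : j = lst := Fin.ext (by
          show (j : ℕ) = m - 1
          have := j.isLt
          omega)
        subst hj
        rw [hrecm' n] at hne ⊢
        refine sumBound2 ?_ ?_ hne
        · intro h; exact hbPm h
        · intro h; have := hbD lst h; omega
    · by_cases hj0 : (j₀ : ℕ) = 0
      · -- dominant moves to the last column
        have hj₀z : j₀ = z := Fin.ext (by rw [hzv]; exact hj0)
        rw [hj₀z] at hj₀ne hj₀eq
        have heq0 : m * (A n z).natDegree + (m - 1) = μ := by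
          rw [hzv] at hj₀eq
          omega
        refine ⟨lst, ?_⟩
        rw [hrecm' n]
        have ha : P lst * A n z ≠ 0 := mul_ne_zero hPmne hj₀ne
        have hda : (P lst * A n z).natDegree = S + 1 + (A n z).natDegree := by
          rw [Polynomial.natDegree_mul hPmne hj₀ne, hPmdeg]
        have hval : m * (P lst * A n z).natDegree + (m - 1 - (lst : ℕ)) = μ + (m * S + 1) := by
          rw [hda, hlv, Nat.mul_add, Nat.mul_add]
          omega
        have hdb : (N * (X * derivative (A n lst))).degree < (P lst * A n z).degree := by
          rcases eq_or_ne (N * (X * derivative (A n lst))) 0 with h | h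
          · rw [h, Polynomial.degree_zero, Polynomial.degree_eq_natDegree ha]
            exact WithBot.bot_lt_coe _
          · have h1 := hbD lst h
            rw [hlv] at h1
            have h2 : m * (N * (X * derivative (A n lst))).natDegree <
                m * (P lst * A n z).natDegree := by
              rw [hda, Nat.mul_add, Nat.mul_add]
              omega
            exact Polynomial.degree_lt_degree (Nat.lt_of_mul_lt_mul_left h2)
        have hdeg := Polynomial.degree_add_eq_left_of_degree_lt hdb
        have hne2 : P lst * A n z + N * (X * derivative (A n lst)) ≠ 0 := by
          intro h0
          rw [h0, Polynomial.degree_zero] at hdeg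
          exact ha (Polynomial.degree_eq_bot.mp hdeg.symm)
        have hnd := Polynomial.natDegree_eq_of_degree_eq hdeg
        exact ⟨hne2, by rw [hnd]; exact hval⟩
      · -- dominant moves to column j₀ - 1
        have hj₀pos : 1 ≤ (j₀ : ℕ) := by omega
        have hj₀lt : (j₀ : ℕ) < m := j₀.isLt
        have hj₁lt : (j₀ : ℕ) - 1 < m := by omega
        have hj₁l : (((⟨(j₀ : ℕ) - 1, hj₁lt⟩ : Fin m)) : ℕ) + 1 < m := by
          show (j₀ : ℕ) - 1 + 1 < m
          omega
        have hco : (⟨(((⟨(j₀ : ℕ) - 1, hj₁lt⟩ : Fin m)) : ℕ) + 1, hj₁l⟩ : Fin m) = j₀ := by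
          apply Fin.ext
          show (j₀ : ℕ) - 1 + 1 = (j₀ : ℕ)
          omega
        refine ⟨⟨(j₀ : ℕ) - 1, hj₁lt⟩, ?_⟩
        rw [hrec' n ⟨(j₀ : ℕ) - 1, hj₁lt⟩ hj₁l, hco]
        have hj₁v : (((⟨(j₀ : ℕ) - 1, hj₁lt⟩ : Fin m)) : ℕ) = (j₀ : ℕ) - 1 := rfl
        have hc : N * A n j₀ ≠ 0 := mul_ne_zero hN hj₀ne
        have hdc : (N * A n j₀).natDegree = S + (A n j₀).natDegree := by
          rw [Polynomial.natDegree_mul hN hj₀ne, ← hSdef]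
        have hval : m * (N * A n j₀).natDegree +
            (m - 1 - (((⟨(j₀ : ℕ) - 1, hj₁lt⟩ : Fin m)) : ℕ)) = μ + (m * S + 1) := by
          rw [hdc, Nat.mul_add, hj₁v]
          omega
        have hab : (P ⟨(j₀ : ℕ) - 1, hj₁lt⟩ * A n z +
            N * (X * derivative (A n ⟨(j₀ : ℕ) - 1, hj₁lt⟩))).degree < (N * A n j₀).degree := by
          rcases eq_or_ne (P ⟨(j₀ : ℕ) - 1, hj₁lt⟩ * A n z +
              N * (X * derivative (A n ⟨(j₀ : ℕ) - 1, hj₁lt⟩))) 0 with h | h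
          · rw [h, Polynomial.degree_zero, Polynomial.degree_eq_natDegree hc]
            exact WithBot.bot_lt_coe _
          · have hble : m * (P ⟨(j₀ : ℕ) - 1, hj₁lt⟩ * A n z +
                N * (X * derivative (A n ⟨(j₀ : ℕ) - 1, hj₁lt⟩))).natDegree +
                (m - 1 - (((⟨(j₀ : ℕ) - 1, hj₁lt⟩ : Fin m)) : ℕ)) ≤ μ + m * S := by
              refine sumBound2 ?_ ?_ h
              · intro h1; exact hbP _ hj₁l h1
              · intro h1; exact hbD _ h1
            rw [hj₁v] at hble
            have h2 : m * (P ⟨(j₀ : ℕ) - 1, hj₁lt⟩ * A n z +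
                N * (X * derivative (A n ⟨(j₀ : ℕ) - 1, hj₁lt⟩))).natDegree <
                m * (N * A n j₀).natDegree := by
              rw [hdc, Nat.mul_add]
              omega
            exact Polynomial.degree_lt_degree (Nat.lt_of_mul_lt_mul_left h2)
        have hdeg := Polynomial.degree_add_eq_right_of_degree_lt hab
        have hne2 : P ⟨(j₀ : ℕ) - 1, hj₁lt⟩ * A n z +
            N * (X * derivative (A n ⟨(j₀ : ℕ) - 1, hj₁lt⟩)) + N * A n j₀ ≠ 0 := by
          intro h0
          rw [h0, Polynomial.degree_zero] at hdeg
          exact hc (Polynomial.degree_eq_bot.mp hdeg.symm)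
        have hnd := Polynomial.natDegree_eq_of_degree_eq hdeg
        exact ⟨hne2, by rw [hnd]; exact hval⟩
  -- the invariant holds for all n
  obtain ⟨j₀, hj₀⟩ := hA0
  set Fs : Finset (Fin m) := Finset.univ.filter (fun j => A 0 j ≠ 0) with hFsdef
  have hFs : Fs.Nonempty := ⟨j₀, by simp [hFsdef, hj₀]⟩
  set μ₀ : ℕ := Fs.sup' hFs (fun j => m * (A 0 j).natDegree + (m - 1 - (j : ℕ))) with hμ₀def
  have hGood : ∀ n : ℕ,
      (∀ j : Fin m, A n j ≠ 0 →
        m * (A n j).natDegree + (m - 1 - (j : ℕ)) ≤ μ₀ + n * (m * S + 1)) ∧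
      (∃ j : Fin m, A n j ≠ 0 ∧
        m * (A n j).natDegree + (m - 1 - (j : ℕ)) = μ₀ + n * (m * S + 1)) := by
    intro n
    induction n with
    | zero =>
      constructor
      · intro j hj
        have hmem : j ∈ Fs := by simp [hFsdef, hj]
        have := Finset.le_sup' (f := fun j : Fin m =>
          m * (A 0 j).natDegree + (m - 1 - (j : ℕ))) hmem
        rw [← hμ₀def] at this
        omega
      · obtain ⟨j, hjm, hje⟩ := Finset.exists_mem_eq_sup' hFs
          (fun j : Fin m => m * (A 0 j).natDegree + (m - 1 - (j : ℕ)))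
        refine ⟨j, (Finset.mem_filter.mp hjm).2, ?_⟩
        rw [hμ₀def, hje]
        omega
    | succ n ih =>
      have h2 := key n (μ₀ + n * (m * S + 1)) ih
      have e : μ₀ + (n + 1) * (m * S + 1) = μ₀ + n * (m * S + 1) + (m * S + 1) := by ring
      rw [e]
      exact h2
  intro k
  have hch : ∀ i : Fin m, ∃ j : Fin m, A (k + (i : ℕ)) j ≠ 0 ∧
      m * (A (k + (i : ℕ)) j).natDegree + (m - 1 - (j : ℕ)) =
        μ₀ + (k + (i : ℕ)) * (m * S + 1) :=
    fun i => (hGood (k + (i : ℕ))).2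
  choose ρ hρne hρeq using hch
  have hmod : ∀ x : ℕ, (μ₀ + x * (m * S + 1)) % m = (μ₀ + x) % m := by
    intro x
    have e : μ₀ + x * (m * S + 1) = μ₀ + x + x * S * m := by ring
    rw [e, Nat.add_mul_mod_self_right]
  have hwmod : ∀ (n : ℕ) (j : Fin m),
      m * (A n j).natDegree + (m - 1 - (j : ℕ)) = μ₀ + n * (m * S + 1) →
      (m - 1 - (j : ℕ)) % m = (μ₀ + n) % m := by
    intro n j he
    rw [← hmod n, ← he, Nat.mul_add_mod]
  have hstrict : ∀ (i : Fin m) (j : Fin m), j ≠ ρ i → A (k + (i : ℕ)) j ≠ 0 →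
      m * (A (k + (i : ℕ)) j).natDegree + (m - 1 - (j : ℕ)) + 1 ≤
        μ₀ + (k + (i : ℕ)) * (m * S + 1) := by
    intro i j hne hA
    have h1 := (hGood (k + (i : ℕ))).1 j hA
    rcases Nat.lt_or_ge (m * (A (k + (i : ℕ)) j).natDegree + (m - 1 - (j : ℕ)))
      (μ₀ + (k + (i : ℕ)) * (m * S + 1)) with h | h
    · omega
    · exfalso
      have he : m * (A (k + (i : ℕ)) j).natDegree + (m - 1 - (j : ℕ)) =
          μ₀ + (k + (i : ℕ)) * (m * S + 1) := le_antisymm h1 h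
      have w1 := hwmod _ j he
      have w2 := hwmod _ (ρ i) (hρeq i)
      have hjlt : (j : ℕ) < m := j.isLt
      have hrlt : ((ρ i : Fin m) : ℕ) < m := (ρ i).isLt
      have hw : (m - 1 - (j : ℕ)) = (m - 1 - ((ρ i : Fin m) : ℕ)) := by
        have h3 := w1.trans w2.symm
        rwa [Nat.mod_eq_of_lt (by omega), Nat.mod_eq_of_lt (by omega)] at h3
      exact hne (Fin.ext (by omega))
  have hρinj : Function.Injective ρ := by
    intro i i' he
    have w1 := hwmod _ (ρ i) (hρeq i)
    have w2 := hwmod _ (ρ i') (hρeq i')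
    rw [he] at w1
    have h3 : (μ₀ + (k + (i : ℕ))) % m = (μ₀ + (k + (i' : ℕ))) % m := by
      rw [← w1, ← w2]
    have h5 : ((μ₀ + k) + (i : ℕ)) % m = ((μ₀ + k) + (i' : ℕ)) % m := by
      rw [Nat.add_assoc, Nat.add_assoc]
      exact h3
    have h6 : ((i : ℕ)) % m = ((i' : ℕ)) % m := Nat.ModEq.add_left_cancel' (μ₀ + k) h5
    have := i.isLt
    have := i'.isLt
    exact Fin.ext (by rwa [Nat.mod_eq_of_lt i.isLt, Nat.mod_eq_of_lt i'.isLt] at h6)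
  have hbij : Function.Bijective ρ := Finite.injective_iff_bijective.mp hρinj
  set e : Fin m ≃ Fin m := Equiv.ofBijective ρ hbij with hedef
  have heval : ∀ r : Fin m, e r = ρ r := fun r => rfl
  set T : Polynomial K := ∏ r : Fin m, A (k + (r : ℕ)) (ρ r) with hTdef
  have hTne : T ≠ 0 := Finset.prod_ne_zero_iff.mpr fun r _ => hρne r
  have hTdeg : T.natDegree = ∑ r : Fin m, (A (k + (r : ℕ)) (ρ r)).natDegree :=
    Polynomial.natDegree_prod _ _ fun r _ => hρne r
  set Dtot : ℕ := ∑ r : Fin m, (A (k + (r : ℕ)) (ρ r)).natDegree with hDdef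
  have hterm : ∀ π : Equiv.Perm (Fin m), π ≠ e.symm →
      (∏ i : Fin m, A (k + ((π i : Fin m) : ℕ)) i).degree < (Dtot : WithBot ℕ) := by
    intro π hπ
    by_cases hz2 : ∀ i : Fin m, A (k + ((π i : Fin m) : ℕ)) i ≠ 0
    · have hne1 : (∏ i : Fin m, A (k + ((π i : Fin m) : ℕ)) i) ≠ 0 :=
        Finset.prod_ne_zero_iff.mpr fun i _ => hz2 i
      rw [Polynomial.degree_eq_natDegree hne1,
        Polynomial.natDegree_prod _ _ fun i _ => hz2 i, Nat.cast_lt]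
      have hex : ∃ i : Fin m, π i ≠ e.symm i := by
        by_contra hc
        push_neg at hc
        exact hπ (Equiv.ext hc)
      obtain ⟨i₁, hi₁⟩ := hex
      have hcol : i₁ ≠ ρ (π i₁) := by
        intro hh
        apply hi₁
        conv_rhs => rw [hh]
        rw [← heval (π i₁), Equiv.symm_apply_apply]
      have hsum : ∑ i : Fin m,
          (m * (A (k + ((π i : Fin m) : ℕ)) i).natDegree + (m - 1 - (i : ℕ)))
          < ∑ i : Fin m, (μ₀ + (k + ((π i : Fin m) : ℕ)) * (m * S + 1)) := by
        apply Finset.sum_lt_sum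
        · intro i _
          exact (hGood _).1 i (hz2 i)
        · exact ⟨i₁, Finset.mem_univ _, by
            have := hstrict (π i₁) i₁ hcol (hz2 i₁)
            omega⟩
      have hsum2 : ∑ i : Fin m, (μ₀ + (k + ((π i : Fin m) : ℕ)) * (m * S + 1))
          = ∑ r : Fin m, (μ₀ + (k + (r : ℕ)) * (m * S + 1)) :=
        Equiv.sum_comp π (fun r : Fin m => μ₀ + (k + (r : ℕ)) * (m * S + 1))
      have hsum3 : ∑ r : Fin m, (μ₀ + (k + (r : ℕ)) * (m * S + 1))
          = ∑ r : Fin m, (m * (A (k + (r : ℕ)) (ρ r)).natDegree +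
              (m - 1 - ((ρ r : Fin m) : ℕ))) := by
        apply Finset.sum_congr rfl
        intro r _
        exact (hρeq r).symm
      have hsum4 : ∑ r : Fin m, (m - 1 - ((ρ r : Fin m) : ℕ))
          = ∑ j : Fin m, (m - 1 - (j : ℕ)) := by
        have h7 := Equiv.sum_comp e (fun j : Fin m => (m - 1 - (j : ℕ)))
        simpa only [heval] using h7
      have h8 : m * ∑ i : Fin m, (A (k + ((π i : Fin m) : ℕ)) i).natDegree <
          m * Dtot := by
        rw [hDdef, Finset.mul_sum, Finset.mul_sum]
        have h9 := hsum
        rw [hsum2, hsum3] at h9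
        rw [Finset.sum_add_distrib, Finset.sum_add_distrib, hsum4] at h9
        omega
      exact Nat.lt_of_mul_lt_mul_left h8
    · push_neg at hz2
      obtain ⟨i, hi⟩ := hz2
      have hz3 : (∏ i : Fin m, A (k + ((π i : Fin m) : ℕ)) i) = 0 :=
        Finset.prod_eq_zero (Finset.mem_univ i) hi
      rw [hz3, Polynomial.degree_zero]
      exact WithBot.bot_lt_coe _
  -- the determinant has nonzero coefficient in degree Dtot
  intro hdet
  have hcoeff : (Matrix.det (Matrix.of fun i j : Fin m => A (k + (i : ℕ)) j)).coeff Dtot ≠ 0 := by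
    rw [Matrix.det_apply', Polynomial.finset_sum_coeff]
    have hzero : ∀ π : Equiv.Perm (Fin m), π ∈ (Finset.univ : Finset (Equiv.Perm (Fin m))) →
        π ≠ e.symm →
        (((Equiv.Perm.sign π : ℤ) : Polynomial K) *
          ∏ i, (Matrix.of fun i j : Fin m => A (k + (i : ℕ)) j) (π i) i).coeff Dtot = 0 := by
      intro π _ hπ
      simp only [Matrix.of_apply]
      have hc1 : ((Equiv.Perm.sign π : ℤ) : Polynomial K) =
          Polynomial.C ((Equiv.Perm.sign π : ℤ) : K) :=
        (map_intCast (Polynomial.C : K →+* Polynomial K) _).symm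
      rw [hc1, Polynomial.coeff_C_mul,
        Polynomial.coeff_eq_zero_of_degree_lt (hterm π hπ), mul_zero]
    rw [Finset.sum_eq_single e.symm hzero (fun h => absurd (Finset.mem_univ _) h)]
    simp only [Matrix.of_apply]
    have hprodeq : (∏ i : Fin m, A (k + ((e.symm i : Fin m) : ℕ)) i) = T := by
      rw [hTdef, ← Equiv.prod_comp e (fun i : Fin m => A (k + ((e.symm i : Fin m) : ℕ)) i)]
      apply Finset.prod_congr rfl
      intro r _
      rw [Equiv.symm_apply_apply, heval]
    rw [hprodeq]
    have hc1 : ((Equiv.Perm.sign e.symm : ℤ) : Polynomial K) =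
        Polynomial.C ((Equiv.Perm.sign e.symm : ℤ) : K) :=
      (map_intCast (Polynomial.C : K →+* Polynomial K) _).symm
    rw [hc1, Polynomial.coeff_C_mul]
    have hTD : T.natDegree = Dtot := by rw [hTdeg, hDdef]
    have hlc : T.coeff Dtot = T.leadingCoeff := by
      rw [← hTD]
      exact Polynomial.coeff_natDegree
    rw [hlc]
    exact mul_ne_zero (Int.cast_ne_zero.mpr (Units.ne_zero (Equiv.Perm.sign e.symm)))
      (Polynomial.leadingCoeff_ne_zero.mpr hTne)
  rw [hdet] at hcoeff
  simp at hcoeff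
end

section
/- Let E(D,t) = Q_0(t)D^m - Q_1(t)D^{m-1} - ... - Q_m(t) with r'_m = deg Q_m ≥ 0, deg Q_0 = r'_m + 1, and deg Q_j ≤ r'_m for 1 ≤ j ≤ m. Rewriting E in the variable z = 1/t and θ = z d/dz, the Newton polygon of E at z = 0 has the unique slope (m-1)/m = 1 - 1/m, and all intermediate vertices (i, -r'_{m-i}+i) for 0 < i < m lie strictly above the segment joining (0, -(S'-1)) to (m, -S'+m), where S' = deg Q_0. -/
/-!
After `z = 1/t` the coefficient of `θ^i` has valuation `-deg Q_{m-i} + i`. The two extreme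
coefficients give the vertices `(0, -d)` and `(m, -d - 1 + m)`, where `d = deg Q_m`, and the
segment joining them has slope `1 - 1/m`. Every intermediate vertex lies on or above the line
`y = -d + x` (as `deg Q_{m-i} ≤ d`), which is strictly above that segment for `0 < x < m`.
Hence the Newton polygon is the region over `[0, m]` above this single segment.
-/

open Polynomial

namespace NewtonPolygon

/-- The region `{0 ≤ x ≤ j, y ≥ v}` contributed by a coefficient of degree `j` and valuation `v`. -/
def strip (j v : ℝ) : Set (ℝ × ℝ) :=
  {p | 0 ≤ p.1 ∧ p.1 ≤ j ∧ v ≤ p.2}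

def aboveSegment (L a s : ℝ) : Set (ℝ × ℝ) :=
  {p | 0 ≤ p.1 ∧ p.1 ≤ L ∧ a + p.1 * s ≤ p.2}

variable {L a s : ℝ}

theorem convex_aboveSegment : Convex ℝ (aboveSegment L a s) := by
  rintro p ⟨hp₀, hpL, hp⟩ q ⟨hq₀, hqL, hq⟩ α β hα hβ hαβ
  simp only [aboveSegment, Set.mem_ofPred_eq, Prod.fst_add, Prod.snd_add, Prod.smul_fst,
    Prod.smul_snd, smul_eq_mul]
  obtain rfl : β = 1 - α := by linarith
  refine ⟨by positivity, by nlinarith, ?_⟩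
  nlinarith [mul_le_mul_of_nonneg_left hp hα, mul_le_mul_of_nonneg_left hq hβ]

theorem strip_subset_aboveSegment {j v : ℝ} (hs : 0 ≤ s) (hj : j ≤ L) (hv : a + j * s ≤ v) :
    strip j v ⊆ aboveSegment L a s := by
  rintro p ⟨hp₀, hpj, hp⟩
  exact ⟨hp₀, hpj.trans hj, by nlinarith⟩

/-- A point lying `e` above the line is the convex combination, with weights `1 - x/L` and `x/L`,
of the points lying `e` above the line at `x = 0` and at `x = L`. -/
theorem aboveSegment_subset_convexHull (hL : 0 < L) :
    aboveSegment L a s ⊆ convexHull ℝ (strip 0 a ∪ strip L (a + L * s)) := by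
  rintro p ⟨hp₀, hpL, hp⟩
  set e := p.2 - (a + p.1 * s)
  have hleft : ((0 : ℝ), a + e) ∈ strip 0 a ∪ strip L (a + L * s) :=
    Or.inl ⟨le_rfl, le_rfl, by linarith⟩
  have hright : (L, a + L * s + e) ∈ strip 0 a ∪ strip L (a + L * s) :=
    Or.inr ⟨hL.le, le_rfl, by linarith⟩
  refine segment_subset_convexHull hleft hright
    ⟨1 - p.1 / L, p.1 / L, by rw [sub_nonneg, div_le_one hL]; exact hpL, by positivity,
      by ring, ?_⟩
  ext <;> simp only [Prod.fst_add, Prod.snd_add, Prod.smul_fst, Prod.smul_snd, smul_eq_mul]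
  · field_simp; ring
  · field_simp; ring

theorem convexHull_eq_aboveSegment {S : Set (ℝ × ℝ)} (hL : 0 < L)
    (hleft : strip 0 a ⊆ S) (hright : strip L (a + L * s) ⊆ S)
    (hS : S ⊆ aboveSegment L a s) :
    convexHull ℝ S = aboveSegment L a s :=
  (convexHull_min hS convex_aboveSegment).antisymm
    ((aboveSegment_subset_convexHull hL).trans
      (convexHull_mono (Set.union_subset hleft hright)))

end NewtonPolygon

open NewtonPolygon

theorem natDegree_eq_add_one_of_degree_eq_add_one {R : Type*} [Semiring R] {p q : R[X]}
    (hq : q ≠ 0) (h : p.degree = q.degree + 1) : p.natDegree = q.natDegree + 1 := by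
  apply natDegree_eq_of_degree_eq_some
  rw [h, degree_eq_natDegree hq]
  rfl

theorem natDegree_sub_le_of_lt {K : Type*} [Semiring K] {m : ℕ} {Q : ℕ → K[X]}
    (hQj : ∀ j : ℕ, 1 ≤ j → j ≤ m → (Q j).degree ≤ (Q m).degree) {i : ℕ} (hi : i < m) :
    (Q (m - i)).natDegree ≤ (Q m).natDegree := by
  rcases Nat.eq_zero_or_pos i with rfl | hi₀
  · simp
  · exact natDegree_le_natDegree (hQj (m - i) (by omega) (by omega))

theorem stmt16_general (K : Type*) [Field K]
    (m : ℕ) (hm : 2 ≤ m)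
    (Q : ℕ → Polynomial K)
    (hQm0 : Q m ≠ 0)  -- r'_m = deg Q_m ≥ 0
    (hQ0 : (Q 0).degree = (Q m).degree + 1)
    (hQj : ∀ j : ℕ, 1 ≤ j → j ≤ m → (Q j).degree ≤ (Q m).degree) :
    convexHull ℝ
        (⋃ i ∈ Finset.range (m + 1), {p : ℝ × ℝ | 0 ≤ p.1 ∧ p.1 ≤ (i : ℝ) ∧
          Q (m - i) ≠ 0 ∧ -(((Q (m - i)).natDegree : ℝ)) + (i : ℝ) ≤ p.2}) =
      {p : ℝ × ℝ | 0 ≤ p.1 ∧ p.1 ≤ (m : ℝ) ∧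
        -(((Q 0).natDegree : ℝ)) + 1 + p.1 * ((m : ℝ) - 1) / (m : ℝ) ≤ p.2} ∧
    ∀ i : ℕ, 0 < i → i < m → Q (m - i) ≠ 0 →
      -(((Q (m - i)).natDegree : ℝ)) + (i : ℝ) >
        -(((Q 0).natDegree : ℝ)) + 1 + (i : ℝ) * ((m : ℝ) - 1) / (m : ℝ) := by
  set d := (Q m).natDegree
  have hdeg₀ : (Q 0).natDegree = d + 1 := natDegree_eq_add_one_of_degree_eq_add_one hQm0 hQ0
  have hQ0ne : Q 0 ≠ 0 := ne_zero_of_natDegree_gt (n := d) (by omega)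
  have hmR : (0 : ℝ) < m := by positivity
  have hs₀ : 0 ≤ ((m : ℝ) - 1) / m :=
    div_nonneg (sub_nonneg.2 (by exact_mod_cast (by omega : 1 ≤ m))) hmR.le
  have hs₁ : ((m : ℝ) - 1) / m < 1 := by rw [div_lt_one hmR]; linarith
  have hdeg : ∀ i < m, ((Q (m - i)).natDegree : ℝ) ≤ d := fun i hi => by
    exact_mod_cast natDegree_sub_le_of_lt hQj hi
  have hline : -((Q 0).natDegree : ℝ) + 1 = -d := by rw [hdeg₀]; push_cast; ring
  have hend : -(d : ℝ) + m * (((m : ℝ) - 1) / m) = -((Q (m - m)).natDegree : ℝ) + m := by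
    rw [Nat.sub_self, hdeg₀]; field_simp; push_cast; ring
  simp_rw [mul_div_assoc, hline]
  refine ⟨convexHull_eq_aboveSegment hmR ?_ ?_ ?_, fun i hi₀ him _ => ?_⟩
  · rintro p ⟨hp₀, hp₀', hp⟩
    exact Set.mem_biUnion (Finset.mem_range.2 m.succ_pos)
      ⟨hp₀, by simpa using hp₀', by simpa using hQm0, by simpa using hp⟩
  · rintro p ⟨hp₀, hpm, hp⟩
    exact Set.mem_biUnion (Finset.self_mem_range_succ m)
      ⟨hp₀, hpm, by simpa using hQ0ne, hend ▸ hp⟩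
  · simp only [Set.iUnion_subset_iff, Finset.mem_range]
    rintro i hi p ⟨hp₀, hpi, -, hp⟩
    refine strip_subset_aboveSegment hs₀ (by exact_mod_cast Nat.lt_succ_iff.1 hi) ?_
      ⟨hp₀, hpi, hp⟩
    rcases (Nat.lt_succ_iff.1 hi).lt_or_eq with him | rfl
    · linarith [hdeg i him, mul_le_of_le_one_right (Nat.cast_nonneg i) hs₁.le]
    · exact hend.le
  · linarith [hdeg i him, mul_lt_of_lt_one_right (Nat.cast_pos.2 hi₀) hs₁]

/-- **Appendix §3, case of Condition (290).** Let
`E(D,t) = Q₀(t)D^m - Q₁(t)D^{m-1} - … - Q_m(t)` with `r'_m = deg Q_m ≥ 0`,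
`deg Q₀ = r'_m + 1 (= S')` and `deg Q_j ≤ r'_m` for `1 ≤ j ≤ m`. Rewriting `E` in the
variable `z = 1/t` and `θ = z d/dz`, with `v(ã_i) = -deg Q_{m-i} + i`, the Newton polygon
of `E` at `z = 0` is the region above the single line of slope `(m-1)/m = 1 - 1/m` joining
`(0, -(S'-1))` to `(m, -S'+m)`, and all intermediate vertices `(i, -deg Q_{m-i} + i)` for
`0 < i < m` lie strictly above that line. -/
theorem stmt16 (K : Type*) [Field K] [CharZero K]
    (m : ℕ) (hm : 2 ≤ m)
    (Q : ℕ → Polynomial K)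
    (hQm0 : Q m ≠ 0)  -- r'_m = deg Q_m ≥ 0
    (hQ0 : (Q 0).degree = (Q m).degree + 1)
    (hQj : ∀ j : ℕ, 1 ≤ j → j ≤ m → (Q j).degree ≤ (Q m).degree) :
    convexHull ℝ
        (⋃ i ∈ Finset.range (m + 1), {p : ℝ × ℝ | 0 ≤ p.1 ∧ p.1 ≤ (i : ℝ) ∧
          Q (m - i) ≠ 0 ∧ -(((Q (m - i)).natDegree : ℝ)) + (i : ℝ) ≤ p.2}) =
      {p : ℝ × ℝ | 0 ≤ p.1 ∧ p.1 ≤ (m : ℝ) ∧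
        -(((Q 0).natDegree : ℝ)) + 1 + p.1 * ((m : ℝ) - 1) / (m : ℝ) ≤ p.2} ∧
    ∀ i : ℕ, 0 < i → i < m → Q (m - i) ≠ 0 →
      -(((Q (m - i)).natDegree : ℝ)) + (i : ℝ) >
        -(((Q 0).natDegree : ℝ)) + 1 + (i : ℝ) * ((m : ℝ) - 1) / (m : ℝ) :=
  stmt16_general K m hm Q hQm0 hQ0 hQj
end
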